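/- Let q be a prime power and let F be a monic polynomial in F_{q^2}[T]. Then the sum of μ(D) over all monic polynomials D ∈ F_q[T] (viewed inside F_{q^2}[T]) dividing F equals 1 if F has no monic irreducible divisor lying in F_q[T], and equals 0 otherwise. Here μ is the Möbius function on monic polynomials over F_q. -/

import Mathlib

open scoped Classical

/-- The Möbius function on polynomials over F_q: μ(D) = (−1)^k if D is squarefree with k
monic irreducible factors, and μ(D) = 0 if D is not squarefree. -/
noncomputable def polyMoebius {Fq : Type*} [Field Fq] (D : Polynomial Fq) : ℤ :=
  if Squarefree D then
    (-1) ^ (Multiset.card (UniqueFactorizationMonoid.normalizedFactors D)) else 0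

/-!
A monic `D ∈ K[X]` with `μ(D) ≠ 0` is the product of a set `s` of monic irreducibles, and its
image divides `F` exactly when every member of `s` does, since distinct monic irreducibles stay
coprime in `L[X]`. So the sum runs over the subsets `s` of the finite set `T` of monic
irreducibles of `K[X]` whose images divide `F`, with terms `(-1)^|s|`; it is `1` if `T = ∅` and
`0` otherwise.
-/

open UniqueFactorizationMonoid

namespace Polynomial

variable {K L : Type*} [Field K] [Field L]

theorem finite_setOf_monic_map_dvd (φ : K →+* L) {F : L[X]} (hF : F ≠ 0) :
    {D : K[X] | D.Monic ∧ D.map φ ∣ F}.Finite := by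
  have : Finite {G : L[X] // G.Monic ∧ G ∣ F} := (fintypeSubtypeMonicDvd F hF).finite
  exact (Set.finite_coe_iff.1 this).preimage (map_injective φ φ.injective).injOn
    |>.subset fun D hD => ⟨monic_map_iff.2 hD.1, hD.2⟩

section MonicIrreducibleProducts

variable {s : Finset K[X]} (hs : ∀ p ∈ s, p.Monic ∧ Irreducible p)
include hs

theorem normalizedFactors_prod_monic_irreducible : normalizedFactors (∏ p ∈ s, p) = s.val := by
  rw [Finset.prod_eq_multiset_prod, Multiset.map_id',
    normalizedFactors_prod_eq _ fun p hp => (hs p hp).2]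
  exact (Multiset.map_congr rfl fun p hp => (hs p hp).1.normalize_eq_self).trans
    s.val.map_id'

theorem polyMoebius_prod_monic_irreducible : polyMoebius (∏ p ∈ s, p) = (-1) ^ s.card := by
  have hne : ∏ p ∈ s, p ≠ 0 := Finset.prod_ne_zero_iff.2 fun p hp => (hs p hp).2.ne_zero
  have hsq : Squarefree (∏ p ∈ s, p) := by
    rw [squarefree_iff_nodup_normalizedFactors hne, normalizedFactors_prod_monic_irreducible hs]
    exact s.nodup
  rw [polyMoebius, if_pos hsq, normalizedFactors_prod_monic_irreducible hs, Finset.card_val]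

theorem map_prod_monic_irreducible_dvd_iff (φ : K →+* L) {F : L[X]} :
    (∏ p ∈ s, p).map φ ∣ F ↔ ∀ p ∈ s, p.map φ ∣ F := by
  refine ⟨fun h p hp => (map_dvd φ (Finset.dvd_prod_of_mem _ hp)).trans h, fun h => ?_⟩
  rw [Polynomial.map_prod]
  refine Finset.prod_dvd_of_coprime (fun p hp q hq hpq => ?_) h
  have hndvd : ¬p ∣ q := fun hdvd => hpq <| eq_of_monic_of_associated (hs p hp).1 (hs q hq).1
    ((hs p hp).2.associated_of_dvd (hs q hq).2 hdvd)
  exact (((hs p hp).2.coprime_iff_not_dvd).2 hndvd).map (mapRingHom φ)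

end MonicIrreducibleProducts

theorem injOn_finset_prod_monic_irreducible :
    Set.InjOn (fun s : Finset K[X] => ∏ p ∈ s, p) {s | ∀ p ∈ s, p.Monic ∧ Irreducible p} :=
  fun s hs t ht hst => Finset.val_inj.1 <| by
    rw [← normalizedFactors_prod_monic_irreducible hs,
      ← normalizedFactors_prod_monic_irreducible ht]
    exact congrArg normalizedFactors hst

theorem Monic.prod_normalizedFactors_toFinset_of_polyMoebius_ne_zero {D : K[X]}
    (hD : D.Monic) (hμ : polyMoebius D ≠ 0) : ∏ p ∈ (normalizedFactors D).toFinset, p = D := by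
  have hsq : Squarefree D := by
    by_contra h
    exact hμ (if_neg h)
  have hnodup := (squarefree_iff_nodup_normalizedFactors hD.ne_zero).1 hsq
  rw [Finset.prod_eq_multiset_prod, Multiset.toFinset_val, hnodup.dedup, Multiset.map_id']
  simpa [hD.leadingCoeff] using leadingCoeff_mul_prod_normalizedFactors D

theorem finsum_polyMoebius_monic_map_dvd (φ : K →+* L) {F : L[X]} {T : Finset K[X]}
    (hT : ∀ P, P ∈ T ↔ P.Monic ∧ Irreducible P ∧ P.map φ ∣ F) :
    ∑ᶠ D : K[X], (if D.Monic ∧ D.map φ ∣ F then polyMoebius D else 0)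
      = ∑ s ∈ T.powerset, (-1 : ℤ) ^ s.card := by
  have hmonic_irr : ∀ s ∈ T.powerset, ∀ p ∈ s, p.Monic ∧ Irreducible p := fun s hs p hp =>
    ((hT p).1 (Finset.mem_powerset.1 hs hp)).imp_right And.left
  have hsupp : Function.support (fun D : K[X] =>
      if D.Monic ∧ D.map φ ∣ F then polyMoebius D else 0) ⊆ T.powerset.image (∏ p ∈ ·, p) := by
    intro D hD
    obtain ⟨⟨hDm, hDF⟩, hμ⟩ := ite_ne_right_iff.1 hD
    refine Finset.mem_image.2 ⟨_, Finset.mem_powerset.2 fun p hp => ?_,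
      hDm.prod_normalizedFactors_toFinset_of_polyMoebius_ne_zero hμ⟩
    rw [Multiset.mem_toFinset, Polynomial.mem_normalizedFactors_iff hDm.ne_zero] at hp
    exact (hT p).2 ⟨hp.2.1, hp.1, (map_dvd φ hp.2.2).trans hDF⟩
  rw [finsum_eq_sum_of_support_subset _ hsupp, Finset.sum_image fun s hs t ht =>
    injOn_finset_prod_monic_irreducible (hmonic_irr s hs) (hmonic_irr t ht)]
  refine Finset.sum_congr rfl fun s hs => ?_
  have hdvd : (∏ p ∈ s, p).map φ ∣ F := (map_prod_monic_irreducible_dvd_iff (hmonic_irr s hs) φ).2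
    fun p hp => ((hT p).1 (Finset.mem_powerset.1 hs hp)).2.2
  rw [if_pos ⟨monic_prod_of_monic _ _ fun p hp => (hmonic_irr s hs p hp).1, hdvd⟩,
    polyMoebius_prod_monic_irreducible (hmonic_irr s hs)]

end Polynomial

theorem moebius_sum_detects_no_divisor_in_base_general {Fq Fq2 : Type*} [Field Fq] [Field Fq2]
    [Algebra Fq Fq2]
    (F : Polynomial Fq2) (hF : F.Monic) :
    (∑ᶠ D : Polynomial Fq,
        if D.Monic ∧ D.map (algebraMap Fq Fq2) ∣ F then polyMoebius D else 0)
      = if ¬ ∃ P : Polynomial Fq, P.Monic ∧ Irreducible P ∧ P.map (algebraMap Fq Fq2) ∣ F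
        then 1 else 0 := by
  set φ := algebraMap Fq Fq2
  have hfin : {P : Polynomial Fq | P.Monic ∧ Irreducible P ∧ P.map φ ∣ F}.Finite :=
    (Polynomial.finite_setOf_monic_map_dvd φ hF.ne_zero).subset fun P hP => ⟨hP.1, hP.2.2⟩
  set T := hfin.toFinset
  have hT : ∀ P, P ∈ T ↔ P.Monic ∧ Irreducible P ∧ P.map φ ∣ F := fun P => hfin.mem_toFinset
  have hT_empty : T = ∅ ↔ ¬∃ P : Polynomial Fq, P.Monic ∧ Irreducible P ∧ P.map φ ∣ F := by
    simp [Finset.eq_empty_iff_forall_notMem, hT]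
  rw [Polynomial.finsum_polyMoebius_monic_map_dvd φ hT, Finset.sum_powerset_neg_one_pow_card]
  exact if_congr hT_empty rfl rfl

/-- Let q be a prime power and F a monic polynomial in F_{q^2}[T]. Then
Σ_{D ∈ F_q[T] monic, D | F} μ(D) equals 1 if F has no monic irreducible divisor lying in
F_q[T], and 0 otherwise. -/
theorem moebius_sum_detects_no_divisor_in_base {Fq Fq2 : Type*} [Field Fq] [Field Fq2]
    [Fintype Fq] [Fintype Fq2] [Algebra Fq Fq2]
    (q : ℕ) (hq : Fintype.card Fq = q) (hq2 : Fintype.card Fq2 = q ^ 2)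
    (F : Polynomial Fq2) (hF : F.Monic) :
    (∑ᶠ D : Polynomial Fq,
        if D.Monic ∧ D.map (algebraMap Fq Fq2) ∣ F then polyMoebius D else 0)
      = if ¬ ∃ P : Polynomial Fq, P.Monic ∧ Irreducible P ∧ P.map (algebraMap Fq Fq2) ∣ F
        then 1 else 0 :=
  moebius_sum_detects_no_divisor_in_base_general F hF
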